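/- arXiv:2205.03622 — 4 statements merged into one kernel-verified Lean document; each statement's English description precedes it below -/
import Mathlib

section
/- If every item has size in (1/4, 1/2], then in the final packing produced by Best-Fit, at most one bin contains exactly one item; consequently BF(I) ≤ (n+1)/2 where n is the number of items. -/
/-- One step of Best-Fit: the item `x` is placed in a fullest bin that can accommodate
it, and a new bin is opened iff no existing bin can accommodate it. -/
def BFStep (bins : List (List ℝ)) (x : ℝ) (bins' : List (List ℝ)) : Prop :=
  (∃ i : ℕ, ∃ h : i < bins.length,
      (bins[i]'h).sum + x ≤ 1 ∧
      (∀ j : ℕ, ∀ hj : j < bins.length,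
        (bins[j]'hj).sum + x ≤ 1 → (bins[j]'hj).sum ≤ (bins[i]'h).sum) ∧
      bins' = bins.set i (x :: (bins[i]'h)))
  ∨ ((∀ b ∈ bins, 1 < b.sum + x) ∧ bins' = bins ++ [[x]])

/-- `BFFrom bins I final` holds iff Best-Fit, starting from the packing `bins` and
processing the items of `I` in order, ends with the packing `final`. -/
inductive BFFrom : List (List ℝ) → List ℝ → List (List ℝ) → Prop
  | nil (bins : List (List ℝ)) : BFFrom bins [] bins
  | cons {bins bins' final : List (List ℝ)} {x : ℝ} {xs : List ℝ} :
      BFStep bins x bins' → BFFrom bins' xs final → BFFrom bins (x :: xs) final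

private lemma countP_set' {α : Type*} (p : α → Bool) :
    ∀ (l : List α) (i : ℕ) (v : α) (h : i < l.length),
      (l.set i v).countP p + (if p (l[i]'h) then 1 else 0)
        = l.countP p + (if p v then 1 else 0)
  | a :: t, 0, v, h => by
      simp [List.countP_cons]; omega
  | a :: t, i + 1, v, h => by
      have := countP_set' p t i v (by simpa using h)
      simp [List.countP_cons]
      omega

private lemma sum_len_set :
    ∀ (l : List (List ℝ)) (i : ℕ) (v : List ℝ) (h : i < l.length),
      ((l.set i v).map List.length).sum + (l[i]'h).length
        = (l.map List.length).sum + v.length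
  | a :: t, 0, v, h => by simp; omega
  | a :: t, i + 1, v, h => by
      have := sum_len_set t i v (by simpa using h)
      simp at this ⊢
      omega

/-- Invariant: bins nonempty, items in range, at most one 1-bin. -/
def BFInv (bins : List (List ℝ)) : Prop :=
  (∀ b ∈ bins, b ≠ []) ∧ (∀ b ∈ bins, ∀ y ∈ b, 1 / 4 < y ∧ y ≤ 1 / 2) ∧
    bins.countP (fun b => b.length == 1) ≤ 1

private lemma step_inv {bins bins' : List (List ℝ)} {x : ℝ}
    (hstep : BFStep bins x bins') (hx : 1 / 4 < x ∧ x ≤ 1 / 2) (hinv : BFInv bins) :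
    BFInv bins' ∧
      (bins'.map List.length).sum = (bins.map List.length).sum + 1 := by
  obtain ⟨hne, hrange, hcnt⟩ := hinv
  rcases hstep with ⟨i, h, -, -, rfl⟩ | ⟨hbig, rfl⟩
  · refine ⟨⟨?_, ?_, ?_⟩, ?_⟩
    · intro b hb
      rcases List.mem_or_eq_of_mem_set hb with hb | rfl
      · exact hne b hb
      · simp
    · intro b hb y hy
      rcases List.mem_or_eq_of_mem_set hb with hb | rfl
      · exact hrange b hb y hy
      · rcases List.mem_cons.mp hy with rfl | hy
        · exact hx
        · exact hrange _ (List.getElem_mem h) y hy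
    · have hlen : (bins[i]'h) ≠ [] := hne _ (List.getElem_mem h)
      have h2 : ¬ ((x :: (bins[i]'h)).length == 1) := by
        simp only [List.length_cons, beq_iff_eq]
        have := List.length_pos_iff.mpr hlen
        omega
      have := countP_set' (fun b => b.length == 1) bins i (x :: (bins[i]'h)) h
      simp [h2, hlen] at this
      omega
    · have := sum_len_set bins i (x :: (bins[i]'h)) h
      have hlen : (bins[i]'h) ≠ [] := hne _ (List.getElem_mem h)
      have := List.length_pos_iff.mpr hlen
      simp only [List.length_cons] at *
      omega
  · have hzero : bins.countP (fun b => b.length == 1) = 0 := by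
      rw [List.countP_eq_zero]
      intro b hb
      simp only [beq_iff_eq]
      intro hb1
      rcases b with _ | ⟨y, _ | ⟨z, t⟩⟩
      · simp at hb1
      · have hy := (hrange _ hb y (by simp)).2
        have := hbig _ hb
        simp only [List.sum_cons, List.sum_nil, add_zero] at this
        linarith [hx.2]
      · simp at hb1
    refine ⟨⟨?_, ?_, ?_⟩, ?_⟩
    · intro b hb
      rcases List.mem_append.mp hb with hb | hb
      · exact hne b hb
      · simp at hb; subst hb; simp
    · intro b hb y hy
      rcases List.mem_append.mp hb with hb | hb
      · exact hrange b hb y hy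
      · simp at hb; subst hb; simp at hy; subst hy; exact hx
    · rw [List.countP_append, hzero]
      simp [List.countP_cons]
    · simp

private lemma bffrom_inv {bins I final} (hbf : BFFrom bins I final)
    (hI : ∀ x ∈ I, 1 / 4 < x ∧ x ≤ 1 / 2) (hinv : BFInv bins) :
    BFInv final ∧
      (final.map List.length).sum = (bins.map List.length).sum + I.length := by
  induction hbf with
  | nil => simpa using hinv
  | cons hstep _ ih =>
      obtain ⟨hinv', hsum'⟩ := step_inv hstep (hI _ (by simp)) hinv
      obtain ⟨hf, hs⟩ := ih (fun x hx => hI x (by simp [hx])) hinv'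
      refine ⟨hf, ?_⟩
      simp only [List.length_cons]
      omega

private lemma two_mul_le :
    ∀ (bins : List (List ℝ)), (∀ b ∈ bins, b ≠ []) →
      2 * bins.length ≤ (bins.map List.length).sum
        + bins.countP (fun b => b.length == 1)
  | [], _ => by simp
  | a :: t, h => by
      have ht := two_mul_le t (fun b hb => h b (by simp [hb]))
      have ha : 1 ≤ a.length := List.length_pos_iff.mpr (h a (by simp))
      simp only [List.length_cons, List.map_cons, List.sum_cons, List.countP_cons]
      rcases eq_or_ne a.length 1 with h1 | h1
      · simp [h1]; omega
      · have : ¬ (a.length == 1) := by simpa using h1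
        simp [this]; omega

/-- If all items lie in (1/4, 1/2], then in the final Best-Fit packing at most one bin
contains exactly one item, and consequently `BF(I) ≤ (n+1)/2`. -/
theorem bf_at_most_one_singleton (I : List ℝ)
    (hI : ∀ x ∈ I, 1 / 4 < x ∧ x ≤ 1 / 2)
    (bins : List (List ℝ)) (hbf : BFFrom [] I bins) :
    bins.countP (fun b => b.length == 1) ≤ 1 ∧
      (bins.length : ℝ) ≤ ((I.length : ℝ) + 1) / 2 := by
  have hinv0 : BFInv [] := by refine ⟨by simp, by simp, by simp⟩
  obtain ⟨⟨hne, _, hcnt⟩, hsum⟩ := bffrom_inv hbf hI hinv0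
  simp only [List.map_nil, List.sum_nil, Nat.zero_add, zero_add] at hsum
  refine ⟨hcnt, ?_⟩
  have h2 := two_mul_le bins hne
  have hnat : 2 * bins.length ≤ I.length + 1 := by omega
  have := Nat.cast_le (α := ℝ) |>.mpr hnat
  push_cast at this
  linarith
end

section
/- In the final Best-Fit packing of items with sizes in (1/4, 1/2], at most one bin contains exactly two small items (items of size in (1/4, 1/3]) and no other item. -/
noncomputable def isSSBin (b : List ℝ) : Bool :=
  b.length == 2 && b.all (fun y => decide (y ≤ (1 / 3 : ℝ)))

theorem isSSBin_iff {b : List ℝ} :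
    isSSBin b = true ↔ ∃ y z, b = [y, z] ∧ y ≤ 1 / 3 ∧ z ≤ 1 / 3 := by
  constructor
  · intro h
    simp only [isSSBin, Bool.and_eq_true, beq_iff_eq, List.all_eq_true, decide_eq_true_eq] at h
    obtain ⟨y, z, rfl⟩ := List.length_eq_two.mp h.1
    exact ⟨y, z, rfl, h.2 y (by simp), h.2 z (by simp)⟩
  · rintro ⟨y, z, rfl, hy, hz⟩
    norm_num [isSSBin, hy, hz]

theorem isSSBin_cons_iff {x : ℝ} {b : List ℝ} :
    isSSBin (x :: b) = true ↔ x ≤ 1 / 3 ∧ ∃ a, b = [a] ∧ a ≤ 1 / 3 := by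
  simp only [isSSBin_iff, List.cons.injEq]
  aesop

theorem sum_le_of_isSSBin {b : List ℝ} (h : isSSBin b = true) : b.sum ≤ 2 / 3 := by
  obtain ⟨y, z, rfl, hy, hz⟩ := isSSBin_iff.mp h
  simp only [List.sum_cons, List.sum_nil]
  linarith

theorem lt_sum_of_isSSBin {b : List ℝ} (h : isSSBin b = true) (hb : ∀ y ∈ b, 1 / 4 < y) :
    1 / 2 < b.sum := by
  obtain ⟨y, z, rfl, -, -⟩ := isSSBin_iff.mp h
  have hy := hb y (by simp)
  have hz := hb z (by simp)
  simp only [List.sum_cons, List.sum_nil]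
  linarith

theorem isSSBin_eq_false_of_bestFit {bins : List (List ℝ)} {i : ℕ} (hi : i < bins.length)
    {x : ℝ} (hbest : ∀ j : ℕ, ∀ hj : j < bins.length,
      (bins[j]'hj).sum + x ≤ 1 → (bins[j]'hj).sum ≤ (bins[i]'hi).sum)
    (hlarge : ∀ b ∈ bins, ∀ y ∈ b, 1 / 4 < y) (hnew : isSSBin (x :: bins[i]) = true) :
    ∀ b ∈ bins, isSSBin b = false := by
  intro b hb
  rw [Bool.eq_false_iff]
  intro hss
  obtain ⟨hx, a, ha, ha'⟩ := isSSBin_cons_iff.mp hnew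
  obtain ⟨j, hj, rfl⟩ := List.getElem_of_mem hb
  have hfits : (bins[j]'hj).sum + x ≤ 1 := by linarith [sum_le_of_isSSBin hss]
  have hle : (bins[j]'hj).sum ≤ a := by simpa [ha] using hbest j hj hfits
  linarith [lt_sum_of_isSSBin hss (hlarge _ hb)]

theorem BFStep.forall_mem_items {P : ℝ → Prop} {bins bins' : List (List ℝ)} {x : ℝ}
    (h : BFStep bins x bins') (hbins : ∀ b ∈ bins, ∀ y ∈ b, P y) (hx : P x) :
    ∀ b ∈ bins', ∀ y ∈ b, P y := by
  rcases h with ⟨i, hi, -, -, rfl⟩ | ⟨-, rfl⟩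
  · intro b hb y hy
    rcases List.mem_or_eq_of_mem_set hb with hb | rfl
    · exact hbins b hb y hy
    · rcases List.mem_cons.mp hy with rfl | hy
      · exact hx
      · exact hbins _ (List.getElem_mem hi) y hy
  · intro b hb y hy
    rcases List.mem_append.mp hb with hb | hb
    · exact hbins b hb y hy
    · obtain rfl := List.mem_singleton.mp hb
      obtain rfl := List.mem_singleton.mp hy
      exact hx

theorem BFStep.countP_isSSBin_le_one {bins bins' : List (List ℝ)} {x : ℝ}
    (h : BFStep bins x bins') (hlarge : ∀ b ∈ bins, ∀ y ∈ b, 1 / 4 < y)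
    (hcount : bins.countP isSSBin ≤ 1) : bins'.countP isSSBin ≤ 1 := by
  rcases h with ⟨i, hi, -, hbest, rfl⟩ | ⟨-, rfl⟩
  · rw [List.countP_set hi]
    by_cases hnew : isSSBin (x :: bins[i]) = true
    · have hnone : bins.countP isSSBin = 0 :=
        List.countP_eq_zero.mpr fun b hb => by
          simp [isSSBin_eq_false_of_bestFit hi hbest hlarge hnew b hb]
      simp [hnone, hnew]
    · simp only [Bool.not_eq_true] at hnew
      simp only [hnew, Bool.false_eq_true, if_false]
      omega
  · simpa [List.countP_append, isSSBin] using hcount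

theorem BFFrom.preserves_invariant {Q : ℝ → Prop} {Inv : List (List ℝ) → Prop}
    (hstep : ∀ bins x bins', Q x → BFStep bins x bins' → Inv bins → Inv bins')
    {bins : List (List ℝ)} {I : List ℝ} {final : List (List ℝ)} (h : BFFrom bins I final)
    (hI : ∀ x ∈ I, Q x) (hbins : Inv bins) : Inv final := by
  induction h with
  | nil => exact hbins
  | cons hxs _ ih =>
    exact ih (fun y hy => hI y (List.mem_cons_of_mem _ hy))
      (hstep _ _ _ (hI _ List.mem_cons_self) hxs hbins)

/-- In the final Best-Fit packing of items with sizes in (1/4,1/2], at most one bin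
consists of exactly two small items (sizes in (1/4,1/3]). -/
theorem bf_at_most_one_SS_bin (I : List ℝ)
    (hI : ∀ x ∈ I, 1 / 4 < x ∧ x ≤ 1 / 2)
    (bins : List (List ℝ)) (hbf : BFFrom [] I bins) :
    bins.countP (fun b => b.length == 2 && b.all (fun y => decide (y ≤ (1 / 3 : ℝ)))) ≤ 1 := by
  have hinv := hbf.preserves_invariant (Q := fun x => 1 / 4 < x)
    (Inv := fun bins => (∀ b ∈ bins, ∀ y ∈ b, 1 / 4 < y) ∧ bins.countP isSSBin ≤ 1)
    (fun _ _ _ hx hstep ⟨hlarge, hcount⟩ =>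
      ⟨hstep.forall_mem_items hlarge hx, hstep.countP_isSSBin_le_one hlarge hcount⟩)
    (fun x hx => (hI x hx).1) ⟨by simp, by simp⟩
  exact hinv.2
end

section
/- Let m items be designated 'small' among n items, and place the n items in a uniformly random order. Partition the small items (in their random relative order) into ⌊m/3⌋ groups of three consecutive small items. For a fixed such group, the probability that the three small items of the group appear consecutively in the full random permutation of all n items is m(m−1)/(n(n−1)). -/
/-!
Whether `σ` is a triplet depends only on the set `S` of positions of the small items, and each
`m`-subset `S` of positions arises from exactly `m! (n - m)!` permutations. Listing `S` increasingly
as `s₀ < s₁ < ⋯`, the condition reads `s_{3i+1} = s_{3i} + 1`, `s_{3i+2} = s_{3i} + 2`; deleting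
these two entries and lowering the later ones by `2` is a bijection onto the `(m - 2)`-subsets of
an `(n - 2)`-set. So the probability is `C(n-2, m-2) m! (n-m)! / n! = m(m-1) / (n(n-1))`.
-/

/-- The positions (in increasing order) of the small items (items with label `< m`)
in the arrangement given by the permutation `σ` of `n` items: position `p` holds
item `σ p`. -/
noncomputable def smallPositions (n m : ℕ) (σ : Equiv.Perm (Fin n)) : List ℕ :=
  ((Finset.univ.filter (fun p : Fin n => (σ p : ℕ) < m)).sort (· ≤ ·)).map Fin.val

/-- The `i`-th group of three relatively-consecutive small items (the `(3i+1)`-th,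
`(3i+2)`-th and `(3i+3)`-th small items in order of position) occupies three
consecutive positions of the permutation `σ`. -/
noncomputable def Triplet (n m i : ℕ) (σ : Equiv.Perm (Fin n)) : Prop :=
  (smallPositions n m σ).getD (3 * i + 1) 0 = (smallPositions n m σ).getD (3 * i) 0 + 1 ∧
  (smallPositions n m σ).getD (3 * i + 2) 0 = (smallPositions n m σ).getD (3 * i) 0 + 2

open Finset
open scoped Nat

def ConsecutiveAt (k : ℕ) (F : ℕ → ℕ) : Prop :=
  F (k + 1) = F k + 1 ∧ F (k + 2) = F k + 2

instance (k : ℕ) (F : ℕ → ℕ) : Decidable (ConsecutiveAt k F) :=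
  inferInstanceAs (Decidable (_ ∧ _))

lemma consecutiveAt_congr {k : ℕ} {F G : ℕ → ℕ} (h : ∀ j ≤ k + 2, F j = G j) :
    ConsecutiveAt k F ↔ ConsecutiveAt k G := by
  simp only [ConsecutiveAt, h k (by omega), h (k + 1) (by omega), h (k + 2) le_rfl]

/-- Encodes an `m`-subset of `Fin (m + d)` by its increasing enumeration. The affine tail makes
`contractAt` and `expandAt` below exact inverses, with no boundary cases. -/
def IsStrictMonoWithTail (m d : ℕ) (F : ℕ → ℕ) : Prop :=
  StrictMono F ∧ ∀ j, m ≤ j → F j = j + d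

def contractAt (k : ℕ) (F : ℕ → ℕ) (j : ℕ) : ℕ :=
  if j ≤ k then F j else F (j + 2) - 2

def expandAt (k : ℕ) (G : ℕ → ℕ) (j : ℕ) : ℕ :=
  if j ≤ k then G j else if j = k + 1 then G k + 1 else G (j - 2) + 2

section ContractExpand

variable {k m d : ℕ} {F G : ℕ → ℕ}

lemma consecutiveAt_expandAt : ConsecutiveAt k (expandAt k G) := by
  simp [ConsecutiveAt, expandAt]

lemma expandAt_of_lt (hj : k + 2 < j) : expandAt k G j = G (j - 2) + 2 := by
  rw [expandAt, if_neg (by omega), if_neg (by omega)]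

lemma contractAt_of_lt (hj : k < j) : contractAt k F j = F (j + 2) - 2 := by
  rw [contractAt, if_neg (by omega)]

lemma contractAt_expandAt : contractAt k (expandAt k G) = G := by
  funext j
  by_cases hj : j ≤ k
  · simp [contractAt, expandAt, hj]
  · rw [contractAt_of_lt (by omega), expandAt_of_lt (by omega)]
    simp

lemma expandAt_contractAt (hF : StrictMono F) (hc : ConsecutiveAt k F) :
    expandAt k (contractAt k F) = F := by
  funext j
  rcases (show j ≤ k ∨ j = k + 1 ∨ j = k + 2 ∨ k + 2 < j by omega) with hj | rfl | rfl | hj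
  · simp [expandAt, contractAt, hj]
  · simp [expandAt, contractAt, hc.1]
  · simp [expandAt, contractAt, hc.2]
  · have : j ≤ F j := hF.id_le j
    rw [expandAt_of_lt hj, contractAt_of_lt (by omega), show j - 2 + 2 = j by omega]
    omega

lemma StrictMono.expandAt (hG : StrictMono G) : StrictMono (expandAt k G) := by
  refine strictMono_nat_of_lt_succ fun j => ?_
  rcases (show j < k ∨ j = k ∨ j = k + 1 ∨ k + 1 < j by omega) with hj | rfl | rfl | hj
  · simpa [_root_.expandAt, hj.le, Nat.succ_le_of_lt hj] using hG (lt_add_one j)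
  · simp [_root_.expandAt]
  · simp [_root_.expandAt]
  · rw [expandAt_of_lt (show k + 2 < j + 1 by omega)]
    rcases (show j = k + 2 ∨ k + 2 < j by omega) with rfl | hj'
    · simpa [_root_.expandAt] using hG (lt_add_one k)
    · rw [expandAt_of_lt hj']
      have := hG (show j - 2 < j + 1 - 2 by omega)
      omega

lemma StrictMono.contractAt (hF : StrictMono F) (hc : ConsecutiveAt k F) :
    StrictMono (contractAt k F) := by
  refine strictMono_nat_of_lt_succ fun j => ?_
  rcases (show j < k ∨ j = k ∨ k < j by omega) with hj | rfl | hj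
  · simpa [_root_.contractAt, hj.le, Nat.succ_le_of_lt hj] using hF (lt_add_one j)
  · have := hF (show j + 2 < j + 1 + 2 by omega)
    have := hc.2
    rw [contractAt_of_lt (lt_add_one j), contractAt, if_pos le_rfl]
    omega
  · have := hF (show j + 2 < j + 1 + 2 by omega)
    have : j + 2 ≤ F (j + 2) := hF.id_le (j + 2)
    rw [contractAt_of_lt hj, contractAt_of_lt (by omega)]
    omega

lemma IsStrictMonoWithTail.expandAt (hk : k + 2 < m) (hG : IsStrictMonoWithTail (m - 2) d G) :
    IsStrictMonoWithTail m d (expandAt k G) :=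
  ⟨hG.1.expandAt, fun j hj => by
    rw [expandAt_of_lt (by omega), hG.2 _ (by omega)]; omega⟩

lemma IsStrictMonoWithTail.contractAt (hk : k + 2 < m) (hF : IsStrictMonoWithTail m d F)
    (hc : ConsecutiveAt k F) : IsStrictMonoWithTail (m - 2) d (contractAt k F) :=
  ⟨hF.1.contractAt hc, fun j hj => by
    rw [contractAt_of_lt (by omega), hF.2 _ (by omega)]; omega⟩

def contractAtEquiv (hk : k + 2 < m) (d : ℕ) :
    {F // IsStrictMonoWithTail m d F ∧ ConsecutiveAt k F} ≃
      {G // IsStrictMonoWithTail (m - 2) d G} where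
  toFun F := ⟨contractAt k F, F.2.1.contractAt hk F.2.2⟩
  invFun G := ⟨expandAt k G, G.2.expandAt hk, consecutiveAt_expandAt⟩
  left_inv F := Subtype.ext (expandAt_contractAt F.2.1.1 F.2.2)
  right_inv _ := Subtype.ext contractAt_expandAt

end ContractExpand

def orderEmbFinEquiv {m n d : ℕ} (h : m + d = n) :
    (Fin m ↪o Fin n) ≃ {F // IsStrictMonoWithTail m d F} where
  toFun f := ⟨fun j => if hj : j < m then f ⟨j, hj⟩ else j + d, by
    refine ⟨strictMono_nat_of_lt_succ fun j => ?_, fun j hj => by simp [not_lt.2 hj]⟩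
    rcases (show j + 1 < m ∨ j + 1 = m ∨ m ≤ j by omega) with hj | rfl | hj
    · simp [hj, (lt_add_one j).trans hj]
    · have := (f ⟨j, lt_add_one j⟩).isLt
      rw [dif_pos (lt_add_one j), dif_neg (lt_irrefl _)]
      omega
    · simp [not_lt.2 hj, not_lt.2 (hj.trans (Nat.le_succ j))]⟩
  invFun F := OrderEmbedding.ofStrictMono
    (fun j => ⟨F.1 j, by
      have := F.2.1 j.isLt
      rw [F.2.2 m le_rfl] at this
      omega⟩)
    fun _ _ hab => F.2.1 hab
  left_inv f := by ext j; simp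
  right_inv F := by
    ext j
    by_cases hj : j < m
    · exact dif_pos hj
    · simp [hj, F.2.2 j (not_lt.1 hj)]

lemma orderEmbFinEquiv_apply_of_lt {m n d : ℕ} (h : m + d = n) (f : Fin m ↪o Fin n) {j : ℕ}
    (hj : j < m) : (orderEmbFinEquiv h f).1 j = f ⟨j, hj⟩ :=
  dif_pos hj

lemma natCard_isStrictMonoWithTail (m d : ℕ) :
    Nat.card {F // IsStrictMonoWithTail m d F} = (m + d).choose m := by
  rw [← Nat.card_congr (orderEmbFinEquiv rfl), Nat.card_congr Set.powersetCard.ofFinEmbEquiv,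
    Set.powersetCard.card, Nat.card_fin]

lemma natCard_isStrictMonoWithTail_consecutiveAt {k m : ℕ} (hk : k + 2 < m) (d : ℕ) :
    Nat.card {F // IsStrictMonoWithTail m d F ∧ ConsecutiveAt k F} =
      (m - 2 + d).choose (m - 2) := by
  rw [Nat.card_congr (contractAtEquiv hk d), natCard_isStrictMonoWithTail]

def SortedConsecutiveAt (k : ℕ) {n : ℕ} (S : Finset (Fin n)) : Prop :=
  ConsecutiveAt k (((S.sort (· ≤ ·)).map Fin.val).getD · 0)

instance (k n : ℕ) : DecidablePred (SortedConsecutiveAt k (n := n)) :=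
  fun _ => inferInstanceAs (Decidable (ConsecutiveAt _ _))

lemma getD_map_val_sort {m n : ℕ} {S : Finset (Fin n)} (hS : #S = m) {j : ℕ} (hj : j < m) :
    ((S.sort (· ≤ ·)).map Fin.val).getD j 0 = S.orderEmbOfFin hS ⟨j, hj⟩ := by
  rw [List.getD_eq_getElem _ _ (by simp [hS, hj]), List.getElem_map, orderEmbOfFin_apply]
  rfl

lemma card_filter_sortedConsecutiveAt {k m n : ℕ} (hmn : m ≤ n) (hk : k + 2 < m) :
    #{S : Finset (Fin n) | #S = m ∧ SortedConsecutiveAt k S} = (n - 2).choose (m - 2) := by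
  let e : {S : Finset (Fin n) // #S = m} ≃ {F // IsStrictMonoWithTail m (n - m) F} :=
    Set.powersetCard.ofFinEmbEquiv.symm.trans (orderEmbFinEquiv (Nat.add_sub_cancel' hmn))
  have he : ∀ S : {S : Finset (Fin n) // #S = m},
      SortedConsecutiveAt k S.1 ↔ ConsecutiveAt k (e S).1 :=
    fun S => consecutiveAt_congr fun j hj => by
      rw [getD_map_val_sort S.2 (by omega)]
      exact (orderEmbFinEquiv_apply_of_lt (Nat.add_sub_cancel' hmn) _ _).symm
  rw [← Fintype.card_subtype, ← Nat.card_eq_fintype_card,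
    ← Nat.card_congr (Equiv.subtypeSubtypeEquivSubtypeInter _ _),
    Nat.card_congr ((Equiv.subtypeEquiv e he).trans (Equiv.subtypeSubtypeEquivSubtypeInter _ _)),
    natCard_isStrictMonoWithTail_consecutiveAt hk,
    show m - 2 + (n - m) = n - 2 by omega]

def smallPositionSet (m : ℕ) {n : ℕ} (σ : Equiv.Perm (Fin n)) : Finset (Fin n) :=
  {p | (σ p : ℕ) < m}

lemma card_smallPositionSet {m n : ℕ} (hmn : m ≤ n) (σ : Equiv.Perm (Fin n)) :
    #(smallPositionSet m σ) = m := by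
  rw [card_equiv σ (t := {x : Fin n | (x : ℕ) < m}) (by simp [smallPositionSet]),
    Fin.card_filter_val_lt, min_eq_right hmn]

lemma card_filter_smallPositionSet_eq {m n : ℕ} {S : Finset (Fin n)} (hS : #S = m) :
    #{σ : Equiv.Perm (Fin n) | smallPositionSet m σ = S} = m ! * (n - m)! := by
  let e : Equiv.Perm (Fin n) ≃ Numbering (Fin n) :=
    Equiv.equivCongr (Equiv.refl _) (finCongr (Fintype.card_fin n).symm)
  rw [card_equiv e (t := Numbering.prefixed S), Numbering.card_prefixed, hS, Fintype.card_fin]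
  intro σ
  simp [Numbering.IsPrefix, smallPositionSet, Finset.ext_iff, hS, e, iff_comm]

lemma card_filter_perm_smallPositionSet {m n : ℕ} (hmn : m ≤ n) (P : Finset (Fin n) → Prop)
    [DecidablePred P] :
    #{σ : Equiv.Perm (Fin n) | P (smallPositionSet m σ)} =
      #{S : Finset (Fin n) | #S = m ∧ P S} * (m ! * (n - m)!) := by
  rw [card_eq_sum_card_fiberwise (f := smallPositionSet m) (t := {S | #S = m ∧ P S}),
    sum_const_nat]
  · intro S hS
    rw [mem_filter] at hS
    rw [filter_filter, ← card_filter_smallPositionSet_eq hS.2.1]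
    congr 1
    ext σ
    simp only [mem_filter, mem_univ, true_and, and_iff_right_iff_imp]
    rintro rfl
    exact hS.2.2
  · intro σ hσ
    simp only [coe_filter, mem_univ, true_and, Set.mem_ofPred_eq] at hσ ⊢
    exact ⟨card_smallPositionSet hmn σ, hσ⟩

lemma choose_sub_two_mul_factorial_div_factorial {m n : ℕ} (hm : 2 ≤ m) (hmn : m ≤ n) :
    ((n - 2).choose (m - 2) * (m ! * (n - m)!) : ℕ) / (n ! : ℝ) =
      m * (m - 1) / (n * (n - 1)) := by
  obtain ⟨a, rfl⟩ : ∃ a, m = a + 2 := ⟨m - 2, by omega⟩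
  obtain ⟨b, rfl⟩ : ∃ b, n = b + 2 := ⟨n - 2, by omega⟩
  have key : (b.choose a * a ! * (b - a)! : ℝ) = b ! := by
    exact_mod_cast Nat.choose_mul_factorial_mul_factorial (by omega : a ≤ b)
  rw [show b + 2 - (a + 2) = b - a by omega, Nat.add_sub_cancel, Nat.add_sub_cancel,
    div_eq_div_iff (by positivity) (by push_cast; nlinarith)]
  push_cast [Nat.factorial_succ]
  linear_combination ((a + 2) * (a + 1) * (b + 2) * (b + 1) : ℝ) * key

lemma triplet_iff_sortedConsecutiveAt {n m i : ℕ} (σ : Equiv.Perm (Fin n)) :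
    Triplet n m i σ ↔ SortedConsecutiveAt (3 * i) (smallPositionSet m σ) :=
  Iff.rfl

/-- For a fixed group of three relatively-consecutive small items, the probability
(over a uniformly random permutation of the `n` items, `m` of which are small) that
the three items of the group appear consecutively is `m(m-1)/(n(n-1))`. -/
theorem triplet_probability (n m i : ℕ) (hmn : m ≤ n) (hi : 3 * i + 3 ≤ m) :
    (Nat.card {σ : Equiv.Perm (Fin n) // Triplet n m i σ} : ℝ) /
        (Nat.card (Equiv.Perm (Fin n)) : ℝ) =
      ((m : ℝ) * ((m : ℝ) - 1)) / ((n : ℝ) * ((n : ℝ) - 1)) := by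
  have hcount : Nat.card {σ : Equiv.Perm (Fin n) // Triplet n m i σ} =
      (n - 2).choose (m - 2) * (m ! * (n - m)!) := by
    rw [Nat.card_congr (Equiv.subtypeEquivRight triplet_iff_sortedConsecutiveAt),
      Nat.card_eq_fintype_card, Fintype.card_subtype, card_filter_perm_smallPositionSet hmn,
      card_filter_sortedConsecutiveAt hmn (by omega)]
  rw [hcount, Nat.card_perm, Nat.card_fin,
    choose_sub_two_mul_factorial_div_factorial (by omega) hmn]
end

section
/- Let δ ∈ (0,1/2) and let I(1,t) be the first t items of a list I of items in (0,1]. Suppose I_ℓ(1,t) and I_s(1,t) denote the large (size ≥ δ) and small (size < δ) items in I(1,t). Start from any optimal packing of I_ℓ(1,t) and pack I_s(1,t) greedily by Next-Fit into the residual bin space, opening new bins when necessary. Then the resulting packing of I(1,t) uses at most max{ Opt(I_ℓ(1,t)), W(I(1,t))/(1−δ) + 1 } bins, where W denotes total weight. -/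
/-!
Next-Fit moves past a bin only when the current small item (of size `< δ`) does not fit, so
every bin it leaves behind has load `> 1 - δ`. Hence either no new bin is opened, and the
packing keeps the `Opt(I_ℓ(1,t))` bins of `P`, or all bins but the last are filled to at least
`1 - δ`, and their number is at most `W / (1 - δ) + 1`, since the loads add up to `W`.
-/

/-- A packing of a bin packing instance `I` is a list of bins whose concatenation
is a permutation of `I` and in which every bin has total size at most 1. -/
def IsPackingOf (I : List ℝ) (P : List (List ℝ)) : Prop :=
  P.flatten.Perm I ∧ ∀ b ∈ P, b.sum ≤ 1

/-- The optimal number of unit-capacity bins needed to pack the items of `I`. -/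
noncomputable def bpOpt (I : List ℝ) : ℕ :=
  sInf {k | ∃ P : List (List ℝ), IsPackingOf I P ∧ P.length = k}

/-- Greedily pack the items (third argument) by Next-Fit into the residual space of the
open bins (second argument, processed in order), opening new bins when necessary;
`closed` accumulates the loads of bins already passed. Returns the loads of all bins. -/
noncomputable def nfFillAux : List ℝ → List ℝ → List ℝ → List ℝ
  | closed, opens, [] => closed ++ opens
  | closed, [], x :: xs => nfFillAux closed [x] xs
  | closed, b :: bs, x :: xs =>
      if b + x ≤ 1 then nfFillAux closed ((b + x) :: bs) xs
      else nfFillAux (closed ++ [b]) bs (x :: xs)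
  termination_by _ opens items => (items.length, opens.length)

theorem sum_nfFillAux (closed opens items : List ℝ) :
    (nfFillAux closed opens items).sum = closed.sum + opens.sum + items.sum := by
  induction closed, opens, items using nfFillAux.induct with
  | case1 closed opens => simp [nfFillAux]
  | case2 closed x xs ih => rw [nfFillAux, ih]; simp [add_assoc]
  | case3 closed b bs x xs hfit ih =>
    rw [nfFillAux, if_pos hfit, ih]
    simp only [List.sum_cons]
    ring
  | case4 closed b bs x xs hfit ih =>
    rw [nfFillAux, if_neg hfit, ih]
    simp only [List.sum_append, List.sum_cons, List.sum_nil]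
    ring

theorem nfFillAux_length_eq_or_sub_one_mul_le_sum {δ : ℝ} (closed opens : List ℝ)
    {items : List ℝ} (hclosed : ∀ b ∈ closed, 1 - δ ≤ b) (hnonneg : ∀ x ∈ items, 0 ≤ x)
    (hsmall : ∀ x ∈ items, x < δ) :
    (nfFillAux closed opens items).length = closed.length + opens.length ∨
      ((nfFillAux closed opens items).length - 1 : ℝ) * (1 - δ) ≤
        (nfFillAux closed opens items).sum := by
  induction closed, opens, items using nfFillAux.induct with
  | case1 closed opens => simp [nfFillAux]
  | case2 closed x xs ih =>
    rw [nfFillAux]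
    rcases ih hclosed (fun y hy => hnonneg y (by simp [hy])) (fun y hy => hsmall y (by simp [hy]))
      with hlen | hbound
    · right
      have hfull : (closed.length : ℝ) * (1 - δ) ≤ closed.sum := by
        simpa using List.card_nsmul_le_sum closed _ hclosed
      have hrest : 0 ≤ x + xs.sum := add_nonneg (hnonneg x (by simp))
        (List.sum_nonneg fun y hy => hnonneg y (by simp [hy]))
      rw [hlen, sum_nfFillAux]
      simp only [List.length_singleton, List.sum_singleton]
      push_cast
      linarith
    · exact Or.inr hbound
  | case3 closed b bs x xs hfit ih =>
    rw [nfFillAux, if_pos hfit]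
    simpa using ih hclosed (fun y hy => hnonneg y (by simp [hy]))
      (fun y hy => hsmall y (by simp [hy]))
  | case4 closed b bs x xs hfit ih =>
    have hb : 1 - δ ≤ b := by linarith [hsmall x (by simp)]
    rw [nfFillAux, if_neg hfit]
    rcases ih (List.forall_mem_append.2 ⟨hclosed, by simpa using hb⟩) hnonneg hsmall
      with hlen | hbound
    · left; simp only [hlen, List.length_append, List.length_cons, List.length_nil]; omega
    · exact Or.inr hbound

theorem sum_filter_le_add_sum_filter_lt (δ : ℝ) (l : List ℝ) :
    (l.filter (fun x => decide (δ ≤ x))).sum + (l.filter (fun x => decide (x < δ))).sum =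
      l.sum := by
  simpa [not_le] using List.sum_map_filter_add_sum_map_filter_not (δ ≤ ·) id l

/-- Starting from any optimal packing `P` of the large items (size ≥ δ) of the first
`t` items and packing the small items (size < δ) greedily by Next-Fit into the
residual bin space, the resulting packing uses at most
`max { Opt(I_ℓ(1,t)), W(I(1,t))/(1-δ) + 1 }` bins. -/
theorem nf_fill_bound (δ : ℝ) (hδ : 0 < δ ∧ δ < 1 / 2) (I : List ℝ)
    (hI : ∀ x ∈ I, 0 < x ∧ x ≤ 1) (t : ℕ)
    (L S : List ℝ)
    (hL : L = (I.take t).filter (fun x => decide (δ ≤ x)))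
    (hS : S = (I.take t).filter (fun x => decide (x < δ)))
    (P : List (List ℝ)) (hP : IsPackingOf L P) (hPopt : P.length = bpOpt L) :
    ((nfFillAux [] (P.map List.sum) S).length : ℝ) ≤
      max ((bpOpt L : ℝ)) ((I.take t).sum / (1 - δ) + 1) := by
  have hS_nonneg : ∀ x ∈ S, 0 ≤ x := fun x hx => by
    rw [hS] at hx
    exact (hI x (List.mem_of_mem_take (List.mem_of_mem_filter hx))).1.le
  have hS_small : ∀ x ∈ S, x < δ := fun x hx => by
    rw [hS] at hx
    simpa using List.of_mem_filter hx
  have hweight : (nfFillAux [] (P.map List.sum) S).sum = (I.take t).sum := by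
    rw [sum_nfFillAux, ← List.sum_flatten, hP.1.sum_eq, hL, hS, List.sum_nil, zero_add,
      sum_filter_le_add_sum_filter_lt]
  rcases nfFillAux_length_eq_or_sub_one_mul_le_sum [] (P.map List.sum) (by simp)
    hS_nonneg hS_small with hlen | hbound
  · simp [hlen, hPopt]
  · rw [hweight, ← le_div_iff₀ (by linarith [hδ.2])] at hbound
    exact le_max_of_le_right (by linarith)
end
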